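/- arXiv:1105.3652 — 4 statements merged into one kernel-verified Lean document; each statement's English description precedes it below -/
import Mathlib

section
/- With the notation of the parallel-surface curvature transformation: if K = ν₁ν₂, H = (ν₁+ν₂)/2, H' = (ν₁−ν₂)/2, K̄ = ν̄₁ν̄₂, H̄ = (ν̄₁+ν̄₂)/2, H̄' = (ν̄₁−ν̄₂)/2, where ν̄ᵢ = ε·νᵢ/(1−aνᵢ) and ε = sign((1−aν₁)(1−aν₂)), then 1 + 2aεH̄ + a²K̄ ≠ 0 and K = K̄/(1 + 2aεH̄ + a²K̄), H = (εH̄ + aK̄)/(1 + 2aεH̄ + a²K̄), H' = εH̄'/(1 + 2aεH̄ + a²K̄). -/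
/-! The map `ν ↦ ε ν / (1 - a ν)` taking a principal curvature to the parallel one is inverted
by `ν̄ ↦ ε ν̄ / (1 + a ε ν̄)` as soon as `ε² = 1`, since `1 + a ε ν̄ = (1 - a ν)⁻¹`. Substituting
the inverse into `K`, `H`, `H'` gives the formulas, whose common denominator
`(1 + a ε ν̄₁)(1 + a ε ν̄₂) = 1 + 2 a ε H̄ + a² K̄` is nonzero. -/

namespace ParallelSurface

variable {a ε : ℝ}

theorem sq_ite_one_neg_one (p : Prop) [Decidable p] : (if p then (1 : ℝ) else -1) ^ 2 = 1 := by
  split <;> norm_num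

section Inverse

variable {ν : ℝ}

theorem one_add_mul_parallel (hε : ε ^ 2 = 1) (hν : 1 - a * ν ≠ 0) :
    1 + a * ε * (ε * ν / (1 - a * ν)) = (1 - a * ν)⁻¹ := by
  field_simp
  linear_combination a * ν * hε

theorem mul_one_add_mul_parallel (hε : ε ^ 2 = 1) (hν : 1 - a * ν ≠ 0) :
    ν * (1 + a * ε * (ε * ν / (1 - a * ν))) = ε * (ε * ν / (1 - a * ν)) := by
  rw [one_add_mul_parallel hε hν, ← mul_div_assoc, ← mul_assoc, ← sq, hε, one_mul, div_eq_mul_inv]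

end Inverse

section Invariants

variable {x y ν₁ ν₂ : ℝ}

theorem denom_eq_mul (hε : ε ^ 2 = 1) :
    1 + 2 * a * ε * ((x + y) / 2) + a ^ 2 * (x * y) = (1 + a * ε * x) * (1 + a * ε * y) := by
  linear_combination -a ^ 2 * x * y * hε

variable (hε : ε ^ 2 = 1) (hx : 1 + a * ε * x ≠ 0) (hy : 1 + a * ε * y ≠ 0)
  (hν₁ : ν₁ * (1 + a * ε * x) = ε * x) (hν₂ : ν₂ * (1 + a * ε * y) = ε * y)
include hε hx hy hν₁ hν₂

theorem mul_eq_div_denom :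
    ν₁ * ν₂ = x * y / (1 + 2 * a * ε * ((x + y) / 2) + a ^ 2 * (x * y)) := by
  rw [denom_eq_mul hε, eq_div_iff (mul_ne_zero hx hy)]
  linear_combination ν₂ * (1 + a * ε * y) * hν₁ + ε * x * hν₂ + x * y * hε

theorem half_add_eq_div_denom :
    (ν₁ + ν₂) / 2 = (ε * ((x + y) / 2) + a * (x * y)) /
      (1 + 2 * a * ε * ((x + y) / 2) + a ^ 2 * (x * y)) := by
  rw [denom_eq_mul hε, eq_div_iff (mul_ne_zero hx hy)]
  linear_combination (1 + a * ε * y) / 2 * hν₁ + (1 + a * ε * x) / 2 * hν₂ + a * x * y * hε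

theorem half_sub_eq_div_denom :
    (ν₁ - ν₂) / 2 = ε * ((x - y) / 2) / (1 + 2 * a * ε * ((x + y) / 2) + a ^ 2 * (x * y)) := by
  rw [denom_eq_mul hε, eq_div_iff (mul_ne_zero hx hy)]
  linear_combination (1 + a * ε * y) / 2 * hν₁ - (1 + a * ε * x) / 2 * hν₂

end Invariants

end ParallelSurface

open ParallelSurface in
theorem stmt3_general (a ν₁ ν₂ : ℝ) (h : (1 - a * ν₁) * (1 - a * ν₂) ≠ 0)
    (ε : ℝ) (hε : ε = if 0 < (1 - a * ν₁) * (1 - a * ν₂) then 1 else -1) :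
    let νb₁ := ε * ν₁ / (1 - a * ν₁)
    let νb₂ := ε * ν₂ / (1 - a * ν₂)
    let Kb := νb₁ * νb₂
    let Hb := (νb₁ + νb₂) / 2
    let Hb' := (νb₁ - νb₂) / 2
    1 + 2 * a * ε * Hb + a ^ 2 * Kb ≠ 0 ∧
    ν₁ * ν₂ = Kb / (1 + 2 * a * ε * Hb + a ^ 2 * Kb) ∧
    (ν₁ + ν₂) / 2 = (ε * Hb + a * Kb) / (1 + 2 * a * ε * Hb + a ^ 2 * Kb) ∧
    (ν₁ - ν₂) / 2 = ε * Hb' / (1 + 2 * a * ε * Hb + a ^ 2 * Kb) := by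
  intro νb₁ νb₂ Kb Hb Hb'
  obtain ⟨hu, hv⟩ := mul_ne_zero_iff.mp h
  have hε2 : ε ^ 2 = 1 := hε ▸ sq_ite_one_neg_one _
  have hx : 1 + a * ε * νb₁ ≠ 0 := by
    rw [one_add_mul_parallel hε2 hu]; exact inv_ne_zero hu
  have hy : 1 + a * ε * νb₂ ≠ 0 := by
    rw [one_add_mul_parallel hε2 hv]; exact inv_ne_zero hv
  have hν₁ := mul_one_add_mul_parallel hε2 hu
  have hν₂ := mul_one_add_mul_parallel hε2 hv
  exact ⟨by rw [denom_eq_mul hε2]; exact mul_ne_zero hx hy,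
    mul_eq_div_denom hε2 hx hy hν₁ hν₂, half_add_eq_div_denom hε2 hx hy hν₁ hν₂,
    half_sub_eq_div_denom hε2 hx hy hν₁ hν₂⟩

/-- transformation formulas (4.4) between the curvature invariants
K, H, H' of a time-like surface and K̄, H̄, H̄' of its parallel surface. -/
theorem stmt3 (a ν₁ ν₂ : ℝ) (ha : a ≠ 0) (h : (1 - a * ν₁) * (1 - a * ν₂) ≠ 0)
    (ε : ℝ) (hε : ε = if 0 < (1 - a * ν₁) * (1 - a * ν₂) then 1 else -1) :
    let νb₁ := ε * ν₁ / (1 - a * ν₁)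
    let νb₂ := ε * ν₂ / (1 - a * ν₂)
    let Kb := νb₁ * νb₂
    let Hb := (νb₁ + νb₂) / 2
    let Hb' := (νb₁ - νb₂) / 2
    1 + 2 * a * ε * Hb + a ^ 2 * Kb ≠ 0 ∧
    ν₁ * ν₂ = Kb / (1 + 2 * a * ε * Hb + a ^ 2 * Kb) ∧
    (ν₁ + ν₂) / 2 = (ε * Hb + a * Kb) / (1 + 2 * a * ε * Hb + a ^ 2 * Kb) ∧
    (ν₁ - ν₂) / 2 = ε * Hb' / (1 + 2 * a * ε * Hb + a ^ 2 * Kb) :=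
  stmt3_general a ν₁ ν₂ h ε hε
end

section
/- Suppose real numbers ν₁, ν₂ satisfy α·(ν₁+ν₂)/2 + β·(ν₁−ν₂)/2 + γ = 0 (the relation αH + βH' + γ = 0). Let a ≠ 0 with (1−aν₁)(1−aν₂) ≠ 0, ε = sign((1−aν₁)(1−aν₂)), and ν̄ᵢ = ε·νᵢ/(1−aνᵢ). Then ε(α + 2aγ)·H̄ + εβ·H̄' + γ = −a(α + aγ)·K̄, where H̄ = (ν̄₁+ν̄₂)/2, H̄' = (ν̄₁−ν̄₂)/2, K̄ = ν̄₁ν̄₂. -/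
/-! After multiplication by `(1 - aν₁)(1 - aν₂)`, the difference of the two sides of the relation
for the parallel surface is exactly `αH + βH' + γ`; the sign `ε` enters only through `ε² = 1`. -/

theorem sign_mul_self_eq_one (p : Prop) [Decidable p] :
    ((if p then 1 else -1 : ℝ)) * (if p then 1 else -1) = 1 := by
  split_ifs <;> norm_num

theorem parallel_relation {α β γ a ν₁ ν₂ : ℝ} (h₁ : 1 - a * ν₁ ≠ 0) (h₂ : 1 - a * ν₂ ≠ 0)
    (hrel : α * ((ν₁ + ν₂) / 2) + β * ((ν₁ - ν₂) / 2) + γ = 0) :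
    (α + 2 * a * γ) * ((ν₁ / (1 - a * ν₁) + ν₂ / (1 - a * ν₂)) / 2)
        + β * ((ν₁ / (1 - a * ν₁) - ν₂ / (1 - a * ν₂)) / 2) + γ
      = -a * (α + a * γ) * (ν₁ / (1 - a * ν₁) * (ν₂ / (1 - a * ν₂))) := by
  field_simp
  linear_combination 2 * hrel

theorem parallel_relation_of_mul_self_eq_one {α β γ a ν₁ ν₂ ε : ℝ} (hε : ε * ε = 1)
    (h₁ : 1 - a * ν₁ ≠ 0) (h₂ : 1 - a * ν₂ ≠ 0)
    (hrel : α * ((ν₁ + ν₂) / 2) + β * ((ν₁ - ν₂) / 2) + γ = 0) :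
    ε * (α + 2 * a * γ) * ((ε * ν₁ / (1 - a * ν₁) + ε * ν₂ / (1 - a * ν₂)) / 2)
        + ε * β * ((ε * ν₁ / (1 - a * ν₁) - ε * ν₂ / (1 - a * ν₂)) / 2) + γ
      = -a * (α + a * γ) * (ε * ν₁ / (1 - a * ν₁) * (ε * ν₂ / (1 - a * ν₂))) := by
  have key := parallel_relation h₁ h₂ hrel
  simp only [mul_div_assoc]
  set μ₁ := ν₁ / (1 - a * ν₁)
  set μ₂ := ν₂ / (1 - a * ν₂)
  calc _ = ε * ε * ((α + 2 * a * γ) * ((μ₁ + μ₂) / 2) + β * ((μ₁ - μ₂) / 2)) + γ := by ring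
    _ = ε * ε * (-a * (α + a * γ) * (μ₁ * μ₂)) := by rw [hε, one_mul, one_mul, key]
    _ = _ := by ring

theorem stmt4_general (α β γ a ν₁ ν₂ : ℝ)
    (hrel : α * ((ν₁ + ν₂) / 2) + β * ((ν₁ - ν₂) / 2) + γ = 0)
    (h : (1 - a * ν₁) * (1 - a * ν₂) ≠ 0)
    (ε : ℝ) (hε : ε = if 0 < (1 - a * ν₁) * (1 - a * ν₂) then 1 else -1) :
    let νb₁ := ε * ν₁ / (1 - a * ν₁)
    let νb₂ := ε * ν₂ / (1 - a * ν₂)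
    let Kb := νb₁ * νb₂
    let Hb := (νb₁ + νb₂) / 2
    let Hb' := (νb₁ - νb₂) / 2
    ε * (α + 2 * a * γ) * Hb + ε * β * Hb' + γ = -a * (α + a * γ) * Kb := by
  obtain ⟨h₁, h₂⟩ := mul_ne_zero_iff.mp h
  exact parallel_relation_of_mul_self_eq_one (hε ▸ sign_mul_self_eq_one _) h₁ h₂ hrel

/-- relation (5.5) -- parallel surfaces of a surface with αH + βH' + γ = 0
satisfy ε(α + 2aγ)H̄ + εβH̄' + γ = −a(α + aγ)K̄. -/
theorem stmt4 (α β γ a ν₁ ν₂ : ℝ) (ha : a ≠ 0)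
    (hrel : α * ((ν₁ + ν₂) / 2) + β * ((ν₁ - ν₂) / 2) + γ = 0)
    (h : (1 - a * ν₁) * (1 - a * ν₂) ≠ 0)
    (ε : ℝ) (hε : ε = if 0 < (1 - a * ν₁) * (1 - a * ν₂) then 1 else -1) :
    let νb₁ := ε * ν₁ / (1 - a * ν₁)
    let νb₂ := ε * ν₂ / (1 - a * ν₂)
    let Kb := νb₁ * νb₂
    let Hb := (νb₁ + νb₂) / 2
    let Hb' := (νb₁ - νb₂) / 2
    ε * (α + 2 * a * γ) * Hb + ε * β * Hb' + γ = -a * (α + a * γ) * Kb :=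
  stmt4_general α β γ a ν₁ ν₂ hrel h ε hε
end

section
/- Suppose real numbers ν₁, ν₂ satisfy ν₁ν₂ = α·(ν₁+ν₂)/2 + β·(ν₁−ν₂)/2 + γ (the relation K = αH + βH' + γ). Let a ≠ 0 with (1−aν₁)(1−aν₂) ≠ 0, ε = sign((1−aν₁)(1−aν₂)), and ν̄ᵢ = ε·νᵢ/(1−aνᵢ). Then ε(α + 2aγ)·H̄ + εβ·H̄' + γ = (1 − aα − a²γ)·K̄, where H̄ = (ν̄₁+ν̄₂)/2, H̄' = (ν̄₁−ν̄₂)/2, K̄ = ν̄₁ν̄₂. -/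
/-!
After multiplying by `(1 - aν₁)(1 - aν₂)`, every term except `γ` carries the factor `ε²`; with
`ε² = 1` the claimed relation becomes `-2` times the relation `K = αH + βH' + γ` of `ν₁, ν₂`.
-/

theorem sq_ite_one_neg_one {R : Type*} [Ring R] (p : Prop) [Decidable p] :
    (if p then (1 : R) else -1) ^ 2 = 1 := by
  split_ifs <;> simp

theorem parallel_linear_weingarten {K : Type*} [Field K] [NeZero (2 : K)]
    {α β γ a ν₁ ν₂ ε : K}
    (hrel : ν₁ * ν₂ = α * ((ν₁ + ν₂) / 2) + β * ((ν₁ - ν₂) / 2) + γ)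
    (h₁ : 1 - a * ν₁ ≠ 0) (h₂ : 1 - a * ν₂ ≠ 0) (hε : ε ^ 2 = 1) :
    ε * (α + 2 * a * γ) * ((ε * ν₁ / (1 - a * ν₁) + ε * ν₂ / (1 - a * ν₂)) / 2)
        + ε * β * ((ε * ν₁ / (1 - a * ν₁) - ε * ν₂ / (1 - a * ν₂)) / 2) + γ
      = (1 - a * α - a ^ 2 * γ) * (ε * ν₁ / (1 - a * ν₁) * (ε * ν₂ / (1 - a * ν₂))) := by
  have hrel₂ : 2 * (ν₁ * ν₂) = α * (ν₁ + ν₂) + β * (ν₁ - ν₂) + 2 * γ := by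
    rw [hrel]; field_simp
  field_simp
  linear_combination (-ε ^ 2) * hrel₂ + (-2 * γ * (1 - a * ν₁) * (1 - a * ν₂)) * hε

theorem stmt5_general (α β γ a ν₁ ν₂ : ℝ)
    (hrel : ν₁ * ν₂ = α * ((ν₁ + ν₂) / 2) + β * ((ν₁ - ν₂) / 2) + γ)
    (h : (1 - a * ν₁) * (1 - a * ν₂) ≠ 0)
    (ε : ℝ) (hε : ε = if 0 < (1 - a * ν₁) * (1 - a * ν₂) then 1 else -1) :
    let νb₁ := ε * ν₁ / (1 - a * ν₁)
    let νb₂ := ε * ν₂ / (1 - a * ν₂)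
    let Kb := νb₁ * νb₂
    let Hb := (νb₁ + νb₂) / 2
    let Hb' := (νb₁ - νb₂) / 2
    ε * (α + 2 * a * γ) * Hb + ε * β * Hb' + γ = (1 - a * α - a ^ 2 * γ) * Kb := by
  subst hε
  exact parallel_linear_weingarten hrel (left_ne_zero_of_mul h) (right_ne_zero_of_mul h)
    (sq_ite_one_neg_one _)

/-- relation (5.14) -- parallel surfaces of a surface with K = αH + βH' + γ
satisfy ε(α + 2aγ)H̄ + εβH̄' + γ = (1 − aα − a²γ)K̄. -/
theorem stmt5 (α β γ a ν₁ ν₂ : ℝ) (ha : a ≠ 0)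
    (hrel : ν₁ * ν₂ = α * ((ν₁ + ν₂) / 2) + β * ((ν₁ - ν₂) / 2) + γ)
    (h : (1 - a * ν₁) * (1 - a * ν₂) ≠ 0)
    (ε : ℝ) (hε : ε = if 0 < (1 - a * ν₁) * (1 - a * ν₂) then 1 else -1) :
    let νb₁ := ε * ν₁ / (1 - a * ν₁)
    let νb₂ := ε * ν₂ / (1 - a * ν₂)
    let Kb := νb₁ * νb₂
    let Hb := (νb₁ + νb₂) / 2
    let Hb' := (νb₁ - νb₂) / 2
    ε * (α + 2 * a * γ) * Hb + ε * β * Hb' + γ = (1 - a * α - a ^ 2 * γ) * Kb :=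
  stmt5_general α β γ a ν₁ ν₂ hrel h ε hε
end

section
/- Let E, G, ν₁, ν₂ be functions given in natural principal parameters by E = −a⁻² exp(−2∫_{ν₀}^{ν} f'/(f−g)), G = b⁻² exp(−2∫_{ν₀}^{ν} g'/(g−f)), ν₁ = f(ν), ν₂ = g(ν), where a, b ≠ 0 and f, g are C¹ with f − g never zero. Then √(−E·G)·(ν₁ − ν₂) = (f(ν₀) − g(ν₀))/(|a||b|), a nonzero constant independent of ν. -/
/-! With `D = f - g`, the two exponents add up to `-2 ∫ D'/D = -2 (log |D ν| - log |D ν₀|)`,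
so `-E G = (D ν₀ / (|a| |b| D ν))²`. Since `D` is continuous and never vanishes, `D ν` has the
sign of `D ν₀`, so the square root cancels against the factor `D ν`. -/

open Set Real intervalIntegral

theorem integral_deriv_div_self_eq_log_sub {h h' : ℝ → ℝ} {a b : ℝ}
    (hd : ∀ x ∈ uIcc a b, HasDerivAt h (h' x) x) (hc : ContinuousOn h' (uIcc a b))
    (h0 : ∀ x ∈ uIcc a b, h x ≠ 0) :
    ∫ x in a..b, h' x / h x = log (h b) - log (h a) :=
  integral_eq_sub_of_hasDerivAt (fun x hx => (hd x hx).log (h0 x hx))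
    (hc.div (fun x hx => (hd x hx).continuousAt.continuousWithinAt) h0).intervalIntegrable

theorem exp_neg_two_mul_integral_deriv_div_self {h h' : ℝ → ℝ} {a b : ℝ}
    (hd : ∀ x ∈ uIcc a b, HasDerivAt h (h' x) x) (hc : ContinuousOn h' (uIcc a b))
    (h0 : ∀ x ∈ uIcc a b, h x ≠ 0) :
    exp (-2 * ∫ x in a..b, h' x / h x) = (h a / h b) ^ 2 := by
  have ha := h0 a left_mem_uIcc
  have hb := h0 b right_mem_uIcc
  rw [integral_deriv_div_self_eq_log_sub hd hc h0,
    show -2 * (log (h b) - log (h a)) = ((2 : ℕ) : ℝ) * log (h a / h b) by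
      rw [log_div ha hb]; push_cast; ring,
    exp_nat_mul, exp_log_eq_abs (div_ne_zero ha hb), sq_abs]

theorem integral_div_sub_add_integral_div_sub {f g f' g' : ℝ → ℝ} {a b : ℝ}
    (hf : ContinuousOn f (uIcc a b)) (hg : ContinuousOn g (uIcc a b))
    (hf' : ContinuousOn f' (uIcc a b)) (hg' : ContinuousOn g' (uIcc a b))
    (hfg : ∀ x ∈ uIcc a b, f x ≠ g x) :
    (∫ x in a..b, f' x / (f x - g x)) + ∫ x in a..b, g' x / (g x - f x) =
      ∫ x in a..b, (f' x - g' x) / (f x - g x) := by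
  have hi₁ : IntervalIntegrable (fun x => f' x / (f x - g x)) MeasureTheory.volume a b :=
    (hf'.div (hf.sub hg) fun x hx => sub_ne_zero.2 (hfg x hx)).intervalIntegrable
  have hi₂ : IntervalIntegrable (fun x => g' x / (g x - f x)) MeasureTheory.volume a b :=
    (hg'.div (hg.sub hf) fun x hx => sub_ne_zero.2 (hfg x hx).symm).intervalIntegrable
  rw [← integral_add hi₁ hi₂]
  refine integral_congr fun x _ => ?_
  rw [← neg_sub (f x), div_neg, sub_div]
  ring

theorem mul_pos_of_continuousOn_of_ne_zero {h : ℝ → ℝ} {a b : ℝ}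
    (hc : ContinuousOn h (uIcc a b)) (h0 : ∀ x ∈ uIcc a b, h x ≠ 0) : 0 < h a * h b := by
  by_contra! hab
  have hmem : (0 : ℝ) ∈ uIcc (h a) (h b) := by
    rcases mul_nonpos_iff.mp hab with ⟨ha, hb⟩ | ⟨ha, hb⟩
    · exact mem_uIcc.2 (Or.inr ⟨hb, ha⟩)
    · exact mem_uIcc.2 (Or.inl ⟨ha, hb⟩)
  obtain ⟨t, ht, ht0⟩ := intermediate_value_uIcc hc hmem
  exact h0 t ht ht0

theorem sqrt_sq_div_mul_of_mul_pos {u v : ℝ} (h : 0 < u * v) : √((u / v) ^ 2) * v = u := by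
  rw [sqrt_sq (div_pos_iff.2 (mul_pos_iff.1 h)).le,
    div_mul_cancel₀ u (right_ne_zero_of_mul h.ne')]

/-- Proposition 3.5: in natural principal parameters,
√(−EG)(ν₁ − ν₂) = (f(ν₀) − g(ν₀))/(|a||b|) is a nonzero constant. -/
theorem stmt13 (I : Set ℝ) (hI : I.OrdConnected) (f g f' g' : ℝ → ℝ)
    (hf : ∀ x ∈ I, HasDerivAt f (f' x) x) (hg : ∀ x ∈ I, HasDerivAt g (g' x) x)
    (hf' : ContinuousOn f' I) (hg' : ContinuousOn g' I)
    (hfg : ∀ x ∈ I, f x ≠ g x) (ν₀ : ℝ) (hν₀ : ν₀ ∈ I)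
    (a b : ℝ) (ha : a ≠ 0) (hb : b ≠ 0) :
    let E : ℝ → ℝ := fun ν => -(a⁻¹ ^ 2) * Real.exp (-2 * ∫ t in ν₀..ν, f' t / (f t - g t))
    let G : ℝ → ℝ := fun ν => b⁻¹ ^ 2 * Real.exp (-2 * ∫ t in ν₀..ν, g' t / (g t - f t))
    (∀ ν ∈ I, Real.sqrt (-(E ν * G ν)) * (f ν - g ν) = (f ν₀ - g ν₀) / (|a| * |b|)) ∧
    (f ν₀ - g ν₀) / (|a| * |b|) ≠ 0 := by
  intro E G
  refine ⟨fun ν hν => ?_, div_ne_zero (sub_ne_zero.2 (hfg ν₀ hν₀)) (by positivity)⟩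
  have hsub : uIcc ν₀ ν ⊆ I := hI.uIcc_subset hν₀ hν
  have hd : ∀ x ∈ uIcc ν₀ ν, HasDerivAt (fun t => f t - g t) (f' x - g' x) x :=
    fun x hx => (hf x (hsub hx)).sub (hg x (hsub hx))
  have hfc : ContinuousOn f (uIcc ν₀ ν) :=
    fun x hx => (hf x (hsub hx)).continuousAt.continuousWithinAt
  have hgc : ContinuousOn g (uIcc ν₀ ν) :=
    fun x hx => (hg x (hsub hx)).continuousAt.continuousWithinAt
  have hD : ∀ x ∈ uIcc ν₀ ν, f x - g x ≠ 0 := fun x hx => sub_ne_zero.2 (hfg x (hsub hx))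
  have hEG : -(E ν * G ν) = ((f ν₀ - g ν₀) / (|a| * |b|) / (f ν - g ν)) ^ 2 := calc
    -(E ν * G ν) = (a⁻¹ ^ 2 * b⁻¹ ^ 2) * exp (-2 * ((∫ t in ν₀..ν, f' t / (f t - g t)) +
        ∫ t in ν₀..ν, g' t / (g t - f t))) := by
      simp only [E, G]; rw [mul_add, exp_add]; ring
    _ = (a⁻¹ ^ 2 * b⁻¹ ^ 2) * ((f ν₀ - g ν₀) / (f ν - g ν)) ^ 2 := by
      rw [integral_div_sub_add_integral_div_sub hfc hgc (hf'.mono hsub) (hg'.mono hsub)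
          fun x hx => hfg x (hsub hx),
        exp_neg_two_mul_integral_deriv_div_self hd ((hf'.sub hg').mono hsub) hD]
    _ = _ := by field_simp; rw [sq_abs, sq_abs]; ring
  have hsign : 0 < (f ν₀ - g ν₀) / (|a| * |b|) * (f ν - g ν) := by
    rw [div_mul_eq_mul_div]
    exact div_pos (mul_pos_of_continuousOn_of_ne_zero (hfc.sub hgc) hD) (by positivity)
  rw [hEG, sqrt_sq_div_mul_of_mul_pos hsign]
end
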